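/- arXiv:math/0407526 — 4 statements merged into one kernel-verified Lean document; each statement's English description precedes it below -/
import Mathlib

section
/- Let H be a complex Hilbert space and A a (bounded, for simplicity) self-adjoint strictly positive operator on H with bounded inverse, and let J be an antiunitary involution on H satisfying JAJ = A^{-1}. Set H_R = {ξ ∈ H : Jξ = ξ}. Then for every ξ ∈ H_R, the vector (2/(A^{-1}+1))^{1/2} ξ has the same norm as ξ; that is, the map ξ ↦ (2/(A^{-1}+1))^{1/2} ξ is an isometric embedding of H_R into H. -/
/-!
Write `T = S²`, so that `T (A⁻¹ + 1) = 2`. Conjugating by `J` turns `A⁻¹ + 1` into `A + 1`,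
and `(A + 1)(2 - T) = 2`; hence `J (2 - T) ξ = T ξ` for `ξ ∈ H_ℝ`. Since `J` preserves real
parts of inner products, `re ⟪T ξ, ξ⟫ = re ⟪(2 - T) ξ, ξ⟫`, i.e. `‖S ξ‖² = re ⟪T ξ, ξ⟫ = ‖ξ‖²`.
-/

open RCLike

section RealInner

variable {𝕜 E : Type*} [RCLike 𝕜] [NormedAddCommGroup E] [InnerProductSpace 𝕜 E]

theorem re_inner_map_map_of_map_add_of_norm_map {J : E → E}
    (hadd : ∀ x y, J (x + y) = J x + J y) (hnorm : ∀ x, ‖J x‖ = ‖x‖) (x y : E) :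
    re (inner 𝕜 (J x) (J y)) = re (inner 𝕜 x y) := by
  rw [re_inner_eq_norm_add_mul_self_sub_norm_mul_self_sub_norm_mul_self_div_two,
    re_inner_eq_norm_add_mul_self_sub_norm_mul_self_sub_norm_mul_self_div_two, ← hadd,
    hnorm, hnorm, hnorm]

theorem re_inner_eq_norm_sq_of_map_two_smul_sub {J : E → E}
    (hadd : ∀ x y, J (x + y) = J x + J y) (hnorm : ∀ x, ‖J x‖ = ‖x‖) {ξ η : E}
    (hξ : J ξ = ξ) (hη : J ((2 : 𝕜) • ξ - η) = η) :
    re (inner 𝕜 η ξ) = ‖ξ‖ ^ 2 := by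
  have h := re_inner_map_map_of_map_add_of_norm_map (𝕜 := 𝕜) hadd hnorm ((2 : 𝕜) • ξ - η) ξ
  rw [hη, hξ, inner_sub_left, inner_smul_left, map_sub, map_ofNat, ofNat_mul_re,
    inner_self_eq_norm_sq] at h
  linarith

end RealInner

theorem add_one_mul_sub_eq {R : Type*} [Ring R] {a b c t : R} (hab : a * b = 1)
    (ht : (b + 1) * t = c) : (a + 1) * (c - t) = c := by
  have hat : (a + 1) * t = a * c := by
    rw [← ht, ← mul_assoc, mul_add, hab, mul_one, add_comm]
  rw [mul_sub, hat, add_mul, one_mul, add_sub_cancel_left]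

theorem ContinuousLinearMap.injective_of_mul_eq_smul_one {𝕜 E : Type*}
    [NontriviallyNormedField 𝕜] [NormedAddCommGroup E] [NormedSpace 𝕜 E] {f g : E →L[𝕜] E}
    {c : 𝕜} (hc : c ≠ 0) (h : g * f = c • 1) : Function.Injective f := by
  intro x y hxy
  have hgf := congr(g $hxy)
  rw [← mul_apply_eq_comp, ← mul_apply_eq_comp, h] at hgf
  exact smul_right_injective E hc hgf

theorem stmt_0_general
    {H : Type*} [NormedAddCommGroup H] [InnerProductSpace ℂ H] [CompleteSpace H]
    (A Ainv S : H →L[ℂ] H) (J : H → H)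
    (hAinv : A * Ainv = 1)
    (hJadd : ∀ x y : H, J (x + y) = J x + J y)
    (hJiso : ∀ x : H, ‖J x‖ = ‖x‖)
    (hJinv : ∀ x : H, J (J x) = x)
    (hJAJ : ∀ x : H, J (A (J x)) = Ainv x)
    (hS : IsSelfAdjoint S)
    (hS2 : S ^ 2 * (Ainv + 1) = (2 : ℂ) • 1)
    (hS2' : (Ainv + 1) * S ^ 2 = (2 : ℂ) • 1) :
    ∀ ξ : H, J ξ = ξ → ‖S ξ‖ = ‖ξ‖ := by
  intro ξ hξ
  have hconj : ∀ x, (Ainv + 1) (J x) = J ((A + 1) x) := fun x => by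
    simp only [add_apply, one_apply_eq_self, hJadd, ← hJAJ, hJinv]
  have hcompl : (A + 1) * ((2 : ℂ) • 1 - S ^ 2) = (2 : ℂ) • 1 := add_one_mul_sub_eq hAinv hS2'
  have hcompl_ξ : (A + 1) ((2 : ℂ) • ξ - (S ^ 2) ξ) = (2 : ℂ) • ξ := by
    simpa using congr($hcompl ξ)
  have hJT : J ((2 : ℂ) • ξ - (S ^ 2) ξ) = (S ^ 2) ξ := by
    refine ContinuousLinearMap.injective_of_mul_eq_smul_one two_ne_zero hS2 ?_
    rw [hconj, hcompl_ξ, ← mul_apply_eq_comp, hS2', two_smul, hJadd, hξ]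
    simp [two_smul]
  have hre := re_inner_eq_norm_sq_of_map_two_smul_sub hJadd hJiso hξ hJT
  have hnorm_sq : ‖S ξ‖ ^ 2 = ‖ξ‖ ^ 2 := by
    rw [ContinuousLinearMap.apply_norm_sq_eq_inner_adjoint_left,
      ← ContinuousLinearMap.star_eq_adjoint, hS]
    exact hre
  exact (pow_left_inj₀ (norm_nonneg _) (norm_nonneg _) two_ne_zero).mp hnorm_sq

/-- If `A` is a bounded invertible positive self-adjoint operator on a complex
Hilbert space `H`, `J` an antiunitary involution with `JAJ = A⁻¹`, and `S` the positive
self-adjoint operator `(2/(A⁻¹+1))^{1/2}` (characterized by `S² (A⁻¹+1) = 2`), then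
`ξ ↦ S ξ` is isometric on the real subspace `H_ℝ = {ξ : Jξ = ξ}`. -/
theorem stmt_0
    {H : Type*} [NormedAddCommGroup H] [InnerProductSpace ℂ H] [CompleteSpace H]
    (A Ainv S : H →L[ℂ] H) (J : H → H)
    (hA : IsSelfAdjoint A)
    (hApos : ∀ x : H, 0 ≤ (inner ℂ (A x) x : ℂ).re)
    (hAinv : A * Ainv = 1) (hAinv' : Ainv * A = 1)
    (hJadd : ∀ x y : H, J (x + y) = J x + J y)
    (hJsmul : ∀ (c : ℂ) (x : H), J (c • x) = (starRingEnd ℂ) c • J x)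
    (hJiso : ∀ x : H, ‖J x‖ = ‖x‖)
    (hJinv : ∀ x : H, J (J x) = x)
    (hJAJ : ∀ x : H, J (A (J x)) = Ainv x)
    (hS : IsSelfAdjoint S)
    (hSpos : ∀ x : H, 0 ≤ (inner ℂ (S x) x : ℂ).re)
    (hS2 : S ^ 2 * (Ainv + 1) = (2 : ℂ) • 1)
    (hS2' : (Ainv + 1) * S ^ 2 = (2 : ℂ) • 1) :
    ∀ ξ : H, J ξ = ξ → ‖S ξ‖ = ‖ξ‖ :=
  stmt_0_general A Ainv S J hAinv hJadd hJiso hJinv hJAJ hS hS2 hS2'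
end

section
/- With H, A, J, H_R as above (A bounded invertible positive self-adjoint, JAJ = A^{-1}), let K_R denote the image of H_R under the isometry ξ ↦ (2/(A^{-1}+1))^{1/2} ξ. Then K_R ∩ i·K_R = {0}; i.e., if ξ, η ∈ H_R and (2/(A^{-1}+1))^{1/2} ξ = i (2/(A^{-1}+1))^{1/2} η, then ξ = η = 0. -/
/-- With `A, J, S` as before and `K_ℝ = S(H_ℝ)` the image of the `J`-fixed real
subspace under `S = (2/(A⁻¹+1))^{1/2}`, one has `K_ℝ ∩ i K_ℝ = {0}`: if `ξ, η` are `J`-fixed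
and `S ξ = i • S η` then `ξ = η = 0`. -/
theorem stmt_1
    {H : Type*} [NormedAddCommGroup H] [InnerProductSpace ℂ H] [CompleteSpace H]
    (A Ainv S : H →L[ℂ] H) (J : H → H)
    (hA : IsSelfAdjoint A)
    (hApos : ∀ x : H, 0 ≤ (inner ℂ (A x) x : ℂ).re)
    (hAinv : A * Ainv = 1) (hAinv' : Ainv * A = 1)
    (hJadd : ∀ x y : H, J (x + y) = J x + J y)
    (hJsmul : ∀ (c : ℂ) (x : H), J (c • x) = (starRingEnd ℂ) c • J x)
    (hJiso : ∀ x : H, ‖J x‖ = ‖x‖)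
    (hJinv : ∀ x : H, J (J x) = x)
    (hJAJ : ∀ x : H, J (A (J x)) = Ainv x)
    (hS : IsSelfAdjoint S)
    (hSpos : ∀ x : H, 0 ≤ (inner ℂ (S x) x : ℂ).re)
    (hS2 : S ^ 2 * (Ainv + 1) = (2 : ℂ) • 1)
    (hS2' : (Ainv + 1) * S ^ 2 = (2 : ℂ) • 1) :
    ∀ ξ η : H, J ξ = ξ → J η = η → S ξ = Complex.I • S η → ξ = 0 ∧ η = 0 := by
  intro ξ η hξ hη h
  -- Applying (Ainv+1)∘S to both sides of h gives 2ξ = 2(i•η).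
  have key : ∀ x : H, (Ainv + 1) (S (S x)) = (2 : ℂ) • x := by
    intro x
    have := congrArg (fun T : H →L[ℂ] H => T x) hS2'
    simpa [ContinuousLinearMap.mul_apply, pow_two] using this
  have h2 : (Ainv + 1) (S (S ξ)) = (Ainv + 1) (S (Complex.I • S η)) := by rw [h]
  rw [key, map_smul, map_smul, key] at h2
  have hξη : ξ = Complex.I • η := by
    have h3 : (2 : ℂ) • ξ = (2 : ℂ) • (Complex.I • η) := by
      rw [h2, smul_comm]
    have := smul_right_injective H (two_ne_zero (α := ℂ)) h3
    exact this
  -- Now use J-fixedness: ξ = Jξ = J(i•η) = -i•η, so i•η = -i•η.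
  have hη0 : η = 0 := by
    have h4 : Complex.I • η = (-Complex.I) • η := by
      calc Complex.I • η = ξ := hξη.symm
        _ = J ξ := hξ.symm
        _ = J (Complex.I • η) := by rw [hξη]
        _ = (starRingEnd ℂ) Complex.I • J η := hJsmul _ _
        _ = (-Complex.I) • η := by rw [hη, Complex.conj_I]
    have h5 : ((2 : ℂ) * Complex.I) • η = 0 := by
      have := sub_eq_zero.mpr h4
      rw [← sub_smul] at this
      convert this using 2
      ring
    have h6 : (2 : ℂ) * Complex.I ≠ 0 := by
      simp [Complex.I_ne_zero]
    exact (smul_eq_zero.mp h5).resolve_left h6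
  refine ⟨?_, hη0⟩
  rw [hξη, hη0, smul_zero]
end

section
/- Let T = J A^{-1/2} as above and set K_R = {ξ ∈ H : Tξ = ξ}. Then K_R coincides with the image of the J-fixed real subspace H_R = {ξ : Jξ = ξ} under the map ξ ↦ (2/(A^{-1}+1))^{1/2} ξ. -/
/-!
Conjugation by the antiunitary `J` is a ring automorphism of `B(H)` preserving positivity, and it
sends `A⁻¹` to `A`. It therefore sends `S = (2/(A⁻¹+1))^{1/2}` to a positive operator with square
`2/(A+1) = A⁻¹ · 2/(A⁻¹+1) = (R S)²`, and uniqueness of positive square roots gives `J S J = R S`,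
i.e. `J R S = S J`. As `S` is invertible, `J R (S η) = S η` holds exactly when `J η = η`.
-/

open scoped ComplexConjugate

theorem Set.setOf_apply_eq_self_eq_image {α : Type*} {J R S : α → α} (hJ : Function.Involutive J)
    (hS : Function.Bijective S) (hJSJ : ∀ x, J (S (J x)) = R (S x)) :
    {ξ | J (R ξ) = ξ} = S '' {η | J η = η} := by
  ext ξ
  obtain ⟨η, rfl⟩ := hS.surjective ξ
  simp only [Set.mem_ofPred_eq, hS.injective.mem_set_image, ← hJSJ, hJ (S (J η))]
  exact hS.injective.eq_iff

section Antiunitary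

variable {𝕜 E F : Type*} [RCLike 𝕜] [NormedAddCommGroup E] [InnerProductSpace 𝕜 E]
  [NormedAddCommGroup F] [InnerProductSpace 𝕜 F]

theorem LinearIsometry.re_inner_map_map_of_star (J : E →ₗᵢ⋆[𝕜] F) (x y : E) :
    RCLike.re (inner 𝕜 (J x) (J y)) = RCLike.re (inner 𝕜 x y) := by
  simp only [re_inner_eq_norm_add_mul_self_sub_norm_mul_self_sub_norm_mul_self_div_two,
    ← map_add, J.norm_map]

theorem LinearIsometry.inner_map_map_of_star (J : E →ₗᵢ⋆[𝕜] F) (x y : E) :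
    inner 𝕜 (J x) (J y) = inner 𝕜 y x := by
  apply RCLike.ext
  · rw [J.re_inner_map_map_of_star, inner_re_symm]
  · have h := J.re_inner_map_map_of_star ((RCLike.I : 𝕜) • y) x
    simp only [map_smulₛₗ, RCLike.conj_I, inner_smul_left, map_neg, neg_mul, RCLike.I_mul_re,
      neg_neg] at h
    rw [← h, ← inner_conj_symm, RCLike.conj_im]

namespace LinearIsometryEquiv

def ofInvolutive (J : E → E) (map_add : ∀ x y, J (x + y) = J x + J y)
    (map_smul : ∀ (c : 𝕜) x, J (c • x) = conj c • J x) (norm_map : ∀ x, ‖J x‖ = ‖x‖)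
    (hJ : Function.Involutive J) : E ≃ₗᵢ⋆[𝕜] E where
  toFun := J
  invFun := J
  map_add' := map_add
  map_smul' := map_smul
  left_inv := hJ
  right_inv := hJ
  norm_map' := norm_map

def conjRingEquiv (J : E ≃ₗᵢ⋆[𝕜] E) : (E →L[𝕜] E) ≃+* (E →L[𝕜] E) :=
  { J.toContinuousLinearEquiv.arrowCongrSL J.toContinuousLinearEquiv with
    map_mul' _ _ := by ext; simp }

variable (J : E ≃ₗᵢ⋆[𝕜] E)

theorem inner_conjRingEquiv_apply (T : E →L[𝕜] E) (x y : E) :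
    inner 𝕜 (J.conjRingEquiv T x) y = inner 𝕜 (J.symm y) (T (J.symm x)) := by
  conv_lhs => rw [← J.apply_symm_apply y]
  exact J.toLinearIsometry.inner_map_map_of_star _ _

theorem conjRingEquiv_nonneg {T : E →L[𝕜] E} (hT : 0 ≤ T) : 0 ≤ J.conjRingEquiv T := by
  rw [ContinuousLinearMap.nonneg_iff_isPositive] at hT ⊢
  refine ⟨fun x y => ?_, fun x => ?_⟩
  · rw [ContinuousLinearMap.coe_coe, inner_conjRingEquiv_apply, ← inner_conj_symm x,
      inner_conjRingEquiv_apply, ← hT.inner_left_eq_inner_right, inner_conj_symm]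
  · rw [ContinuousLinearMap.reApplyInnerSelf, inner_conjRingEquiv_apply]
    exact hT.re_inner_nonneg_right _

end LinearIsometryEquiv

end Antiunitary

theorem isUnit_of_sq_mul_eq {M : Type*} [Monoid M] {a b c : M} (hc : IsUnit c)
    (h : a ^ 2 * b = c) (h' : b * a ^ 2 = c) : IsUnit a :=
  (isUnit_pow_iff two_ne_zero).1 ((Commute.isUnit_mul_iff (h.trans h'.symm)).1 (h ▸ hc)).1

theorem isUnit_two_of_algebra (K : Type*) {A : Type*} [Field K] [NeZero (2 : K)] [Ring A]
    [Algebra K A] : IsUnit (2 : A) := by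
  rw [← map_ofNat (algebraMap K A) 2]
  exact (IsUnit.mk0 _ two_ne_zero).map _

section Hilbert

variable {H : Type*} [NormedAddCommGroup H] [InnerProductSpace ℂ H] [CompleteSpace H]

theorem ContinuousLinearMap.nonneg_of_re_inner_nonneg {T : H →L[ℂ] H} (hT : IsSelfAdjoint T)
    (hpos : ∀ x, 0 ≤ (inner ℂ (T x) x).re) : 0 ≤ T :=
  (nonneg_iff_isPositive T).2 (isPositive_def'.2 ⟨hT, hpos⟩)

theorem LinearIsometryEquiv.conjRingEquiv_eq_mul_of_sq_mul_sq_add_one {J : H ≃ₗᵢ⋆[ℂ] H}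
    {R S : H →L[ℂ] H} (hR : 0 ≤ R) (hS : 0 ≤ S) (hSR : Commute S R)
    (hJR : J.conjRingEquiv (R ^ 2) * R ^ 2 = 1) (hS2 : S ^ 2 * (R ^ 2 + 1) = 2)
    (hS2' : (R ^ 2 + 1) * S ^ 2 = 2) : J.conjRingEquiv S = R * S := by
  have hconj : J.conjRingEquiv S ^ 2 * (J.conjRingEquiv (R ^ 2) + 1) = 2 := by
    simpa only [map_mul, _root_.map_add, map_one, map_ofNat, map_pow _ S] using
      congrArg J.conjRingEquiv hS2
  have hinv : (J.conjRingEquiv (R ^ 2) + 1) * (R ^ 2 * S ^ 2) = 2 := by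
    rw [add_mul, ← mul_assoc, hJR, one_mul, one_mul, ← hS2', add_mul, one_mul, add_comm]
  have hsq : J.conjRingEquiv S ^ 2 = (R * S) ^ 2 := by
    rw [hSR.symm.mul_pow]
    refine (isUnit_two_of_algebra ℂ).mul_left_cancel ?_
    calc 2 * J.conjRingEquiv S ^ 2 = J.conjRingEquiv S ^ 2 * 2 := by rw [two_mul, mul_two]
      _ = J.conjRingEquiv S ^ 2 * ((J.conjRingEquiv (R ^ 2) + 1) * (R ^ 2 * S ^ 2)) := by
        rw [hinv]
      _ = 2 * (R ^ 2 * S ^ 2) := by rw [← mul_assoc, hconj]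
  exact (CFC.sq_eq_sq_iff _ _ (J.conjRingEquiv_nonneg hS) (hSR.symm.mul_nonneg hR hS)).1 hsq

end Hilbert

theorem stmt_3_general
    {H : Type*} [NormedAddCommGroup H] [InnerProductSpace ℂ H] [CompleteSpace H]
    (A Ainv R S : H →L[ℂ] H) (J : H → H)
    (hAinv : A * Ainv = 1)
    (hJadd : ∀ x y : H, J (x + y) = J x + J y)
    (hJsmul : ∀ (c : ℂ) (x : H), J (c • x) = (starRingEnd ℂ) c • J x)
    (hJiso : ∀ x : H, ‖J x‖ = ‖x‖)
    (hJinv : ∀ x : H, J (J x) = x)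
    (hJAJ : ∀ x : H, J (A (J x)) = Ainv x)
    (hR : IsSelfAdjoint R)
    (hRpos : ∀ x : H, 0 ≤ (inner ℂ (R x) x : ℂ).re)
    (hR2 : R ^ 2 * A = 1)
    (hS : IsSelfAdjoint S)
    (hSpos : ∀ x : H, 0 ≤ (inner ℂ (S x) x : ℂ).re)
    (hS2 : S ^ 2 * (Ainv + 1) = (2 : ℂ) • 1)
    (hS2' : (Ainv + 1) * S ^ 2 = (2 : ℂ) • 1)
    (hSR : S * R = R * S) :
    {ξ : H | J (R ξ) = ξ} = (fun ξ : H => S ξ) '' {ξ : H | J ξ = ξ} := by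
  have hR2inv : R ^ 2 = Ainv := by rw [← mul_one (R ^ 2), ← hAinv, ← mul_assoc, hR2, one_mul]
  subst hR2inv
  have htwo : ((2 : ℂ) • 1 : H →L[ℂ] H) = 2 := by rw [two_smul, one_add_one_eq_two]
  rw [htwo] at hS2 hS2'
  let J' := LinearIsometryEquiv.ofInvolutive J hJadd hJsmul hJiso hJinv
  have hJR : J'.conjRingEquiv (R ^ 2) = A := by
    ext x
    change J ((R ^ 2) (J x)) = A x
    rw [← hJAJ, hJinv, hJinv]
  have hJSJ : J'.conjRingEquiv S = R * S :=
    J'.conjRingEquiv_eq_mul_of_sq_mul_sq_add_one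
      (ContinuousLinearMap.nonneg_of_re_inner_nonneg hR hRpos)
      (ContinuousLinearMap.nonneg_of_re_inner_nonneg hS hSpos) hSR (by rw [hJR, hAinv]) hS2 hS2'
  have hSbij : Function.Bijective S := ContinuousLinearMap.isUnit_iff_bijective.1 <|
    isUnit_of_sq_mul_eq (isUnit_two_of_algebra ℂ) hS2 hS2'
  exact Set.setOf_apply_eq_self_eq_image hJinv hSbij fun x => congr($hJSJ x)

/-- With `T = J A^{-1/2} = J ∘ R` and `K_ℝ = {ξ : Tξ = ξ}`, the set `K_ℝ`
coincides with the image of the `J`-fixed real subspace `H_ℝ = {ξ : Jξ = ξ}` under the map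
`ξ ↦ S ξ`, where `S = (2/(A⁻¹+1))^{1/2}`. -/
theorem stmt_3
    {H : Type*} [NormedAddCommGroup H] [InnerProductSpace ℂ H] [CompleteSpace H]
    (A Ainv R S : H →L[ℂ] H) (J : H → H)
    (hA : IsSelfAdjoint A)
    (hApos : ∀ x : H, 0 ≤ (inner ℂ (A x) x : ℂ).re)
    (hAinv : A * Ainv = 1) (hAinv' : Ainv * A = 1)
    (hJadd : ∀ x y : H, J (x + y) = J x + J y)
    (hJsmul : ∀ (c : ℂ) (x : H), J (c • x) = (starRingEnd ℂ) c • J x)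
    (hJiso : ∀ x : H, ‖J x‖ = ‖x‖)
    (hJinv : ∀ x : H, J (J x) = x)
    (hJAJ : ∀ x : H, J (A (J x)) = Ainv x)
    (hR : IsSelfAdjoint R)
    (hRpos : ∀ x : H, 0 ≤ (inner ℂ (R x) x : ℂ).re)
    (hR2 : R ^ 2 * A = 1) (hR2' : A * R ^ 2 = 1)
    (hS : IsSelfAdjoint S)
    (hSpos : ∀ x : H, 0 ≤ (inner ℂ (S x) x : ℂ).re)
    (hS2 : S ^ 2 * (Ainv + 1) = (2 : ℂ) • 1)
    (hS2' : (Ainv + 1) * S ^ 2 = (2 : ℂ) • 1)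
    (hSR : S * R = R * S) (hSA : S * A = A * S) :
    {ξ : H | J (R ξ) = ξ} = (fun ξ : H => S ξ) '' {ξ : H | J ξ = ξ} :=
  stmt_3_general A Ainv R S J hAinv hJadd hJsmul hJiso hJinv hJAJ hR hRpos hR2 hS hSpos hS2 hS2' hSR
end

section
/- Let T be a closed, densely defined antilinear operator on a complex Hilbert space H with T = T^{-1} (an involution), and let T = J A^{-1/2} be its polar decomposition with J antiunitary and A^{-1/2} positive self-adjoint injective. Then J is an involution (J² = 1) and J A J = A^{-1}. -/
/-! Since `T = J R` is its own inverse, `T = R⁻¹ J⁻¹ = J⁻¹ P` with `P = J R⁻¹ J⁻¹`, i.e.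
`P = (J J) R`. Conjugation by an antiunitary preserves positivity, so `P ≥ 0`, and `J J` is
unitary, so `P² = R (J J)* (J J) R = R²`. Uniqueness of positive square roots gives `P = R`,
hence `J J = 1` and `J R⁻² J = P² = R²`. -/

open scoped InnerProductSpace ComplexConjugate

theorem LinearIsometry.inner_map_map_conj {E F : Type*} [NormedAddCommGroup E]
    [InnerProductSpace ℂ E] [NormedAddCommGroup F] [InnerProductSpace ℂ F]
    (J : E →ₗᵢ⋆[ℂ] F) (x y : E) : ⟪J x, J y⟫_ℂ = ⟪y, x⟫_ℂ := by
  have key (c : ℂ) (hc : ‖c‖ = 1) : ‖J x + c • J y‖ = ‖y + c • x‖ :=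
    calc ‖J x + c • J y‖ = ‖x + conj c • y‖ := by
          rw [← J.norm_map, map_add, J.map_smulₛₗ, Complex.conj_conj]
      _ = ‖c • (x + conj c • y)‖ := by rw [norm_smul, hc, one_mul]
      _ = ‖y + c • x‖ := by
          rw [smul_add, smul_smul, Complex.mul_conj, Complex.normSq_eq_norm_sq, hc, add_comm]
          simp
  have h₁ : ‖J x + J y‖ = ‖y + x‖ := by simpa using key 1 (by simp)
  have h₂ : ‖J x - J y‖ = ‖y - x‖ := by simpa [← sub_eq_add_neg] using key (-1) (by simp)
  have h₃ : ‖J x - Complex.I • J y‖ = ‖y - Complex.I • x‖ := by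
    simpa [← sub_eq_add_neg] using key (-Complex.I) (by simp)
  have h₄ : ‖J x + Complex.I • J y‖ = ‖y + Complex.I • x‖ := key Complex.I (by simp)
  rw [inner_eq_sum_norm_sq_div_four, inner_eq_sum_norm_sq_div_four (𝕜 := ℂ) y x]
  simp only [RCLike.I_to_complex, h₁, h₂, h₃, h₄]

theorem ContinuousLinearMap.IsPositive.conj_antiunitary {H : Type*} [NormedAddCommGroup H]
    [InnerProductSpace ℂ H] {S : H →L[ℂ] H} (hS : S.IsPositive) (J : H ≃ₗᵢ⋆[ℂ] H) :
    ((J : H →SL[starRingEnd ℂ] H) ∘SL S ∘SL (J.symm : H →SL[starRingEnd ℂ] H)).IsPositive := by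
  rw [isPositive_iff_complex]
  intro x
  have h : ⟪J (S (J.symm x)), x⟫_ℂ = ⟪S (J.symm x), J.symm x⟫_ℂ :=
    calc ⟪J (S (J.symm x)), x⟫_ℂ = ⟪J (S (J.symm x)), J (J.symm x)⟫_ℂ := by
          rw [J.apply_symm_apply]
      _ = ⟪J.symm x, S (J.symm x)⟫_ℂ := J.toLinearIsometry.inner_map_map_conj _ _
      _ = ⟪S (J.symm x), J.symm x⟫_ℂ := (hS.isSymmetric _ _).symm
  simpa [h] using (isPositive_iff_complex S).mp hS (J.symm x)

theorem eq_of_nonneg_of_eq_isometry_mul {A : Type*} [CStarAlgebra A] [PartialOrder A]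
    [StarOrderedRing A] {P R U : A} (hP : 0 ≤ P) (hR : 0 ≤ R) (hU : star U * U = 1)
    (h : P = U * R) : P = R := by
  refine (CFC.sq_eq_sq_iff P R).mp ?_
  calc P ^ 2 = star P * P := by rw [hP.isSelfAdjoint.star_eq, sq]
    _ = star R * (star U * U) * R := by rw [h, star_mul]; noncomm_ring
    _ = R ^ 2 := by rw [hU, mul_one, hR.isSelfAdjoint.star_eq, sq]

theorem LinearIsometryEquiv.involutive_and_conj_inv_eq_of_involutive_comp {H : Type*}
    [NormedAddCommGroup H] [InnerProductSpace ℂ H] [CompleteSpace H] (J : H ≃ₗᵢ⋆[ℂ] H)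
    {R Rinv : H →L[ℂ] H} (hR : 0 ≤ R) (hRinv : R * Rinv = 1) (hRinv' : Rinv * R = 1)
    (hT : ∀ x, J (R (J (R x))) = x) :
    (∀ x, J (J x) = x) ∧ ∀ x, J (Rinv (J x)) = R x := by
  let P : H →L[ℂ] H :=
    (J : H →SL[starRingEnd ℂ] H) ∘SL Rinv ∘SL (J.symm : H →SL[starRingEnd ℂ] H)
  let U : H →L[ℂ] H := (J.trans J : H ≃ₗᵢ[ℂ] H)
  have hRinv₀ : 0 ≤ Rinv := CFC.inv_nonneg_of_nonneg ⟨R, Rinv, hRinv, hRinv'⟩ hR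
  have hP₀ : 0 ≤ P := P.nonneg_iff_isPositive.mpr
    ((Rinv.nonneg_iff_isPositive.mp hRinv₀).conj_antiunitary J)
  have hU : star U * U = 1 := by rw [LinearIsometryEquiv.star_eq_symm]; ext; simp [U]
  have hPU : P = U * R := by
    ext x
    have hJsymm : J.symm x = R (J (R x)) := J.symm_apply_eq.mpr (hT x).symm
    have hRinvR : Rinv (R (J (R x))) = J (R x) := congr($hRinv' (J (R x)))
    change J (Rinv (J.symm x)) = J (J (R x))
    rw [hJsymm, hRinvR]
  have hPR : P = R := eq_of_nonneg_of_eq_isometry_mul hP₀ hR hU hPU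
  have hU1 : U = 1 :=
    calc U = U * R * Rinv := by rw [mul_assoc, hRinv, mul_one]
      _ = 1 := by rw [← hPU, hPR, hRinv]
  have hJJ (x : H) : J (J x) = x := congr($hU1 x)
  refine ⟨hJJ, fun x => ?_⟩
  have hJsymm : J.symm x = J x := J.symm_apply_eq.mpr (hJJ x).symm
  rw [← hJsymm]
  exact congr($hPR x)

/-- bounded-operator version: Let `T = J ∘ R` be an antilinear involution on a
complex Hilbert space, where `R = A^{-1/2}` is a bounded positive self-adjoint operator with
bounded inverse and `J` is antiunitary (the polar decomposition of `T`). Then `J² = 1` and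
`J A J = A⁻¹`, where `A = R⁻²` (so `A⁻¹ = R²`). -/
theorem stmt_17
    {H : Type*} [NormedAddCommGroup H] [InnerProductSpace ℂ H] [CompleteSpace H]
    (R Rinv : H →L[ℂ] H) (J : H → H)
    (hR : IsSelfAdjoint R)
    (hRpos : ∀ x : H, 0 ≤ (inner ℂ (R x) x : ℂ).re)
    (hRinv : R * Rinv = 1) (hRinv' : Rinv * R = 1)
    (hJadd : ∀ x y : H, J (x + y) = J x + J y)
    (hJsmul : ∀ (c : ℂ) (x : H), J (c • x) = (starRingEnd ℂ) c • J x)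
    (hJiso : ∀ x : H, ‖J x‖ = ‖x‖)
    (hJbij : Function.Bijective J)
    (hT : ∀ x : H, J (R (J (R x))) = x) :
    (∀ x : H, J (J x) = x) ∧ (∀ x : H, J ((Rinv ^ 2) (J x)) = (R ^ 2) x) := by
  let Jₑ : H ≃ₗᵢ⋆[ℂ] H := .ofSurjective ⟨⟨⟨J, hJadd⟩, hJsmul⟩, hJiso⟩ hJbij.2
  have hR₀ : 0 ≤ R := R.nonneg_iff_isPositive.mpr ⟨hR.isSymmetric, hRpos⟩
  obtain ⟨hJJ, hJRinvJ⟩ : (∀ x, J (J x) = x) ∧ ∀ x, J (Rinv (J x)) = R x :=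
    Jₑ.involutive_and_conj_inv_eq_of_involutive_comp hR₀ hRinv hRinv' hT
  refine ⟨hJJ, fun x => ?_⟩
  calc J ((Rinv ^ 2) (J x)) = J (Rinv (J (J (Rinv (J x))))) := by rw [hJJ]; rfl
    _ = (R ^ 2) x := by rw [hJRinvJ, hJRinvJ]; rfl
end
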